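/- Upper bound on the tail: for real q ≥ 2 and integers 1 ≤ r ≤ n-1, the P_{n,q} probability that λ_1 < r satisfies P_{n,q}^r ≤ (1-1/q)^{-2} [ q^{-(2n-2r+2)} + q^{-(n+1)} / (1 - q^{-(2n+1)}) ]. -/

import Mathlib

open Finset

noncomputable section

/-- The q-Pochhammer-type product `(1/q)_m = ∏_{k=1}^m (1 - 1/q^k)`. -/
def qPoch (q : ℝ) (m : ℕ) : ℝ := ∏ k ∈ Finset.Icc 1 m, (1 - 1/q^k)

/-- `conjPart l j = λ'_j`, the `j`-th part of the conjugate partition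
(the number of parts of `l` that are at least `j`). -/
def conjPart {n : ℕ} (l : n.Partition) (j : ℕ) : ℕ :=
  Multiset.countP (fun p => j ≤ p) l.parts

/-- `rowLen l i = λ_i`, the `i`-th largest part of `l` (1-indexed, `0` if `i` exceeds
the number of parts). -/
def rowLen {n : ℕ} (l : n.Partition) (i : ℕ) : ℕ :=
  ((Finset.Icc 1 n).filter (fun j => i ≤ conjPart l j)).card

/-- The Young diagram of `l`, as the set of cells `(i,j)` (row `i`, column `j`,
both 1-indexed) with `1 ≤ j ≤ λ_i`. -/
def cells {n : ℕ} (l : n.Partition) : Finset (ℕ × ℕ) :=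
  (Finset.Icc 1 n ×ˢ Finset.Icc 1 n).filter (fun s => s.2 ≤ rowLen l s.1)

/-- The arm length `a(s) = λ_i - j` of the cell `s = (i,j)`. -/
def arm {n : ℕ} (l : n.Partition) (s : ℕ × ℕ) : ℕ := rowLen l s.1 - s.2

/-- The leg length `l(s) = λ'_j - i` of the cell `s = (i,j)`. -/
def leg {n : ℕ} (l : n.Partition) (s : ℕ × ℕ) : ℕ := conjPart l s.2 - s.1

/-- The hook length `h(s) = a(s) + l(s) + 1` of the cell `s`. -/
def hookLen {n : ℕ} (l : n.Partition) (s : ℕ × ℕ) : ℕ := arm l s + leg l s + 1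

/-- `n(λ) = ∑_i (i-1) λ_i`. -/
def nStat {n : ℕ} (l : n.Partition) : ℕ := ∑ i ∈ Finset.Icc 1 n, (i - 1) * rowLen l i

/-- The multiplicity `m_j(λ)` of `j` as a part of `l`. -/
def mult {n : ℕ} (l : n.Partition) (j : ℕ) : ℕ := Multiset.count j l.parts

/-- The denominator `∏_j q^{(λ'_j)^2} (1/q)_{m_j(λ)}` appearing in the measure `P_{n,q}`. -/
def Pden (q : ℝ) {n : ℕ} (l : n.Partition) : ℝ :=
  ∏ j ∈ Finset.Icc 1 n, q ^ ((conjPart l j)^2) * qPoch q (mult l j)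

/-- The measure `P_{n,q}(λ) = q^n (1/q)_n / ∏_j q^{(λ'_j)^2} (1/q)_{m_j(λ)}`. -/
def Pmeas (q : ℝ) {n : ℕ} (l : n.Partition) : ℝ := q^n * qPoch q n / Pden q l

/-- `z(n,q)`: the coefficient of `u^n` in the formal expansion of
`∏_{i≥1} ∏_{j≥0} 1/(1 - u/q^{i+j})`, obtained by expanding each factor
as a geometric series and collecting terms of total degree `n`. -/
def zCoeff (n : ℕ) (q : ℝ) : ℝ :=
  ∑' f : {f : (ℕ × ℕ) →₀ ℕ // (f.sum fun _ k => k) = n},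
    ∏ p ∈ (f : (ℕ × ℕ) →₀ ℕ).support,
      ((1 : ℝ) / q ^ ((p.1 + 1) + p.2)) ^ ((f : (ℕ × ℕ) →₀ ℕ) p)

/-- The measure `Q_{n,q}(λ) = (1/z(n,q)) / (q^{|λ|+2n(λ)} ∏_{s∈λ} (1-1/q^{h(s)})^2)`. -/
def Qmeas (q : ℝ) {n : ℕ} (l : n.Partition) : ℝ :=
  (1 / zCoeff n q) *
    (1 / (q ^ (n + 2 * nStat l) * ∏ s ∈ cells l, (1 - 1/q^(hookLen l s))^2))

/-- `P_{n,q}^r`: the `P_{n,q}`-probability that the largest part of `λ` is `< r`. -/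
def Ptail (n : ℕ) (q : ℝ) (r : ℕ) : ℝ :=
  ∑ l ∈ Finset.univ.filter (fun l : n.Partition => ∀ p ∈ l.parts, p < r), Pmeas q l

end

/-!
Write `P_{n,q}(λ) = (1/q)_n · w(λ)` with `w(λ) = q^n / ∏_j q^{(λ'_j)^2} (1/q)_{m_j(λ)}` (`Pweight`).
Removing one copy of the largest part `a` from `λ ⊢ m` leaves `ρ ⊢ m - a`, lowers `λ'_1, …, λ'_a`
by one and `m_a` by one, so `w(λ) = q^{-2(m-a)} w(ρ) / (1 - q^{-(m_a(ρ)+1)})`. Hence the total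
mass `T_m` of `w` on partitions of `m` (`Pmass`) satisfies `T_m ≤ (1-1/q)⁻¹ ∑_{j<m} q^{-2j} T_j`,
which for `q ≥ 2` forces `T_m ≤ (1-1/q)⁻²`. When `λ_1 < r` the remainder has size
`j ≥ n - r + 1`, so `P^r_{n,q} ≤ (1/q)_n (1-1/q)⁻³ q^{-2(n-r+1)} / (1 - q⁻²)`, and
`(1/q)_n ≤ (1-1/q)(1-q⁻²)`.
-/

open Finset

theorem Multiset.sup_mem_of_ne_zero {α : Type*} [LinearOrder α] [OrderBot α]
    {s : Multiset α} (hs : s ≠ 0) : s.sup ∈ s := by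
  obtain ⟨x, hx, hmax⟩ := Multiset.exists_max_image id hs
  rwa [le_antisymm (Multiset.sup_le.2 hmax) (Multiset.le_sup hx)]

theorem Nat.Partition.parts_ne_zero {n : ℕ} (l : n.Partition) (hn : 0 < n) : l.parts ≠ 0 := by
  rintro h
  have := l.parts_sum
  simp only [h, Multiset.sum_zero] at this
  omega

section QPoch

variable {q : ℝ}

theorem one_sub_one_div_pow_pos (hq : 1 < q) {k : ℕ} (hk : k ≠ 0) :
    0 < 1 - 1 / q ^ k := by
  rw [sub_pos, div_lt_one (by positivity)]
  exact one_lt_pow₀ hq hk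

theorem one_sub_one_div_pos (hq : 1 < q) : 0 < 1 - 1 / q := by
  simpa using one_sub_one_div_pow_pos hq one_ne_zero

theorem one_sub_one_div_pow_le_one (hq : 0 ≤ q) (k : ℕ) : 1 - 1 / q ^ k ≤ 1 := by
  have : 0 ≤ 1 / q ^ k := by positivity
  linarith

theorem qPoch_pos (hq : 1 < q) (m : ℕ) : 0 < qPoch q m :=
  prod_pos fun k hk => one_sub_one_div_pow_pos hq (by simp at hk; omega)

theorem qPoch_le_qPoch (hq : 1 < q) {m k : ℕ} (h : m ≤ k) : qPoch q k ≤ qPoch q m :=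
  prod_le_prod_of_subset_of_le_one (Icc_subset_Icc_right h)
    (fun k hk => (one_sub_one_div_pow_pos hq (by simp at hk; omega)).le)
    (fun k _ _ => one_sub_one_div_pow_le_one (by linarith) k)

theorem qPoch_succ (q : ℝ) (m : ℕ) :
    qPoch q (m + 1) = qPoch q m * (1 - 1 / q ^ (m + 1)) :=
  prod_Icc_succ_top (by omega) _

theorem qPoch_two (q : ℝ) : qPoch q 2 = (1 - 1 / q) * (1 - 1 / q ^ 2) := by
  simp [qPoch, prod_Icc_succ_top]

end QPoch

section Conjugate

theorem sum_Icc_countP_le_eq_sum {N : ℕ} (s : Multiset ℕ) (h : ∀ p ∈ s, p ≤ N) :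
    ∑ j ∈ Icc 1 N, s.countP (fun p => j ≤ p) = s.sum := by
  induction s using Multiset.induction_on with
  | empty => simp
  | cons a t ih =>
    have hfilter : (Icc 1 N).filter (· ≤ a) = Icc 1 a := by
      ext j
      simp only [mem_filter, mem_Icc]
      have := h a (Multiset.mem_cons_self a t)
      omega
    simp only [Multiset.countP_cons, sum_add_distrib, Multiset.sum_cons,
      ih fun p hp => h p (Multiset.mem_cons_of_mem hp), sum_boole, hfilter, Nat.card_Icc,
      Nat.cast_id, Nat.add_sub_cancel]
    ring

variable {n k a : ℕ}

theorem sum_conjPart_Icc (l : n.Partition) {N : ℕ} (h : ∀ p ∈ l.parts, p ≤ N) :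
    ∑ j ∈ Icc 1 N, conjPart l j = n :=
  (sum_Icc_countP_le_eq_sum l.parts h).trans l.parts_sum

theorem conjPart_of_parts_eq_cons {l : n.Partition} {ρ : k.Partition}
    (hl : l.parts = a ::ₘ ρ.parts) (j : ℕ) :
    conjPart l j = conjPart ρ j + if j ≤ a then 1 else 0 := by
  simp only [conjPart, hl, Multiset.countP_cons]

theorem mult_of_parts_eq_cons {l : n.Partition} {ρ : k.Partition}
    (hl : l.parts = a ::ₘ ρ.parts) (j : ℕ) :
    mult l j = mult ρ j + if j = a then 1 else 0 := by
  simp only [mult, hl, Multiset.count_cons]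

end Conjugate

section Pden

variable {q : ℝ} {n k a : ℕ}

theorem Pden_eq_prod_Icc (l : n.Partition) {N : ℕ} (hN : n ≤ N) :
    Pden q l = ∏ j ∈ Icc 1 N, q ^ (conjPart l j ^ 2) * qPoch q (mult l j) := by
  refine prod_subset (Icc_subset_Icc_right hN) fun j hjN hjn => ?_
  have hj : n < j := by simp only [mem_Icc] at hjN hjn; omega
  have hparts : ∀ p ∈ l.parts, p < j := fun p hp =>
    (Nat.Partition.le_of_mem_parts hp).trans_lt hj
  have hconj : conjPart l j = 0 :=
    Multiset.countP_eq_zero.2 fun p hp => (hparts p hp).not_ge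
  have hmult : mult l j = 0 := Multiset.count_eq_zero.2 fun hp => (hparts j hp).false
  simp [hconj, hmult, qPoch]

/-- The exponent: `(ρ'_j + 1)^2 - (ρ'_j)^2 = 2ρ'_j + 1` summed over `j ≤ a` is `2k + a`. -/
theorem Pden_of_parts_eq_cons {l : n.Partition} {ρ : k.Partition}
    (hl : l.parts = a ::ₘ ρ.parts) (hρ : ∀ p ∈ ρ.parts, p ≤ a) :
    Pden q l = Pden q ρ * (q ^ (2 * k + a) * (1 - 1 / q ^ (mult ρ a + 1))) := by
  have hn : n = a + k := by rw [← l.parts_sum, ← ρ.parts_sum, hl, Multiset.sum_cons]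
  have ha : a ∈ Icc 1 n := mem_Icc.2 ⟨l.parts_pos (hl ▸ Multiset.mem_cons_self a _), by omega⟩
  have hfactor : ∀ j, q ^ (conjPart l j ^ 2) * qPoch q (mult l j) =
      q ^ (conjPart ρ j ^ 2) * qPoch q (mult ρ j) *
        ((if j ≤ a then q ^ (2 * conjPart ρ j + 1) else 1) *
          if j = a then 1 - 1 / q ^ (mult ρ a + 1) else 1) := by
    intro j
    have hsq : q ^ ((conjPart ρ j + 1) ^ 2) =
        q ^ (conjPart ρ j ^ 2) * q ^ (2 * conjPart ρ j + 1) := by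
      rw [← pow_add]
      ring_nf
    rw [conjPart_of_parts_eq_cons hl, mult_of_parts_eq_cons hl]
    by_cases hja : j = a
    · subst hja
      simp only [le_refl, if_true, qPoch_succ, hsq]
      ring
    · by_cases hj : j ≤ a <;> simp only [hj, hja, if_true, if_false, add_zero, hsq] <;> ring
  have hsum : ∑ j ∈ Icc 1 a, (2 * conjPart ρ j + 1) = 2 * k + a := by
    rw [sum_add_distrib, ← mul_sum, sum_conjPart_Icc ρ hρ, sum_const, Nat.card_Icc,
      smul_eq_mul, mul_one, Nat.add_sub_cancel]
  have hfilter : (Icc 1 n).filter (· ≤ a) = Icc 1 a := by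
    ext j
    simp only [mem_filter, mem_Icc]
    omega
  rw [Pden_eq_prod_Icc l le_rfl, Pden_eq_prod_Icc ρ (by omega : k ≤ n), prod_congr rfl
    fun j _ => hfactor j, prod_mul_distrib]
  congr 1
  rw [prod_mul_distrib, ← prod_filter, hfilter,
    prod_pow_eq_pow_sum, hsum, prod_ite_eq' _ _ (fun _ => 1 - 1 / q ^ (mult ρ a + 1)), if_pos ha]

end Pden

section Weight

variable {q : ℝ} {n k a : ℕ}

noncomputable def Pweight (q : ℝ) {n : ℕ} (l : n.Partition) : ℝ := q ^ n / Pden q l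

noncomputable def Pmass (q : ℝ) (n : ℕ) : ℝ := ∑ l : n.Partition, Pweight q l

theorem Pmeas_eq_qPoch_mul_Pweight (l : n.Partition) :
    Pmeas q l = qPoch q n * Pweight q l := by
  rw [Pmeas, Pweight, mul_comm, mul_div_assoc]

theorem Pden_pos (hq : 1 < q) (l : n.Partition) : 0 < Pden q l :=
  prod_pos fun _ _ => mul_pos (pow_pos (by linarith) _) (qPoch_pos hq _)

theorem Pweight_pos (hq : 1 < q) (l : n.Partition) : 0 < Pweight q l :=
  div_pos (pow_pos (by linarith) _) (Pden_pos hq l)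

theorem Pmass_zero : Pmass q 0 = 1 := by
  simp [Pmass, Pweight, Pden]

theorem Pweight_le_of_parts_eq_cons (hq : 1 < q) {l : n.Partition} {ρ : k.Partition}
    (hl : l.parts = a ::ₘ ρ.parts) (hρ : ∀ p ∈ ρ.parts, p ≤ a) :
    Pweight q l ≤ (1 - 1 / q)⁻¹ * (1 / q) ^ (2 * k) * Pweight q ρ := by
  have hn : n = a + k := by rw [← l.parts_sum, ← ρ.parts_sum, hl, Multiset.sum_cons]
  have hs : 0 < 1 - 1 / q ^ (mult ρ a + 1) := one_sub_one_div_pow_pos hq (by omega)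
  have hle : 1 - 1 / q ≤ 1 - 1 / q ^ (mult ρ a + 1) := by
    gcongr
    exact le_self_pow₀ hq.le (by omega)
  have heq : Pweight q l =
      (1 - 1 / q ^ (mult ρ a + 1))⁻¹ * (1 / q) ^ (2 * k) * Pweight q ρ := by
    have := Pden_pos hq ρ
    rw [Pweight, Pweight, Pden_of_parts_eq_cons hl hρ, hn]
    generalize 1 - 1 / q ^ (mult ρ a + 1) = s at hs ⊢
    rw [one_div_pow]
    field_simp
    ring
  have := Pweight_pos hq ρ
  rw [heq]
  gcongr
  exact one_sub_one_div_pos hq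

theorem sum_Pweight_filter_sup_eq_le (hq : 1 < q) {m : ℕ} (ha : 1 ≤ a) (ham : a ≤ m) :
    ∑ l ∈ univ.filter (fun l : m.Partition => l.parts.sup = a), Pweight q l ≤
      (1 - 1 / q)⁻¹ * (1 / q) ^ (2 * (m - a)) * Pmass q (m - a) := by
  set e := Nat.Partition.partitionWithPartEquiv ha ham
  set G := univ.filter fun ρ : (m - a).Partition => ∀ p ∈ ρ.parts, p ≤ a
  have hsub : univ.filter (fun l : m.Partition => l.parts.sup = a) ⊆
      G.image fun ρ => (e.symm ρ).1 := by
    intro l hl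
    have hl : l.parts.sup = a := (mem_filter.1 hl).2
    have hal : a ∈ l.parts := hl ▸ Multiset.sup_mem_of_ne_zero (l.parts_ne_zero (by omega))
    refine mem_image.2 ⟨e ⟨l, hal⟩, mem_filter.2 ⟨mem_univ _, fun p hp => ?_⟩, by simp⟩
    rw [Nat.Partition.partitionWithPartEquiv_apply_parts] at hp
    exact hl ▸ Multiset.le_sup (Multiset.mem_of_mem_erase hp)
  calc ∑ l ∈ univ.filter (fun l : m.Partition => l.parts.sup = a), Pweight q l
      ≤ ∑ l ∈ G.image (fun ρ => (e.symm ρ).1), Pweight q l :=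
        sum_le_sum_of_subset_of_nonneg hsub fun l _ _ => (Pweight_pos hq l).le
    _ = ∑ ρ ∈ G, Pweight q (e.symm ρ).1 :=
        sum_image fun _ _ _ _ h => e.symm.injective (Subtype.ext h)
    _ ≤ ∑ ρ ∈ G, (1 - 1 / q)⁻¹ * (1 / q) ^ (2 * (m - a)) * Pweight q ρ :=
        sum_le_sum fun ρ hρ => Pweight_le_of_parts_eq_cons hq
          (Nat.Partition.partitionWithPartEquiv_symm_apply_parts ha ham ρ) (mem_filter.1 hρ).2
    _ ≤ ∑ ρ, (1 - 1 / q)⁻¹ * (1 / q) ^ (2 * (m - a)) * Pweight q ρ := by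
        refine sum_le_sum_of_subset_of_nonneg (subset_univ _) fun ρ _ _ => ?_
        have := one_sub_one_div_pos hq
        have := Pweight_pos hq ρ
        positivity
    _ = (1 - 1 / q)⁻¹ * (1 / q) ^ (2 * (m - a)) * Pmass q (m - a) := by
        rw [Pmass, mul_sum]

theorem sum_Pweight_filter_lt_le (hq : 1 < q) {m r : ℕ} (hm : 0 < m) (hr : r ≤ m + 1) :
    ∑ l ∈ univ.filter (fun l : m.Partition => ∀ p ∈ l.parts, p < r), Pweight q l ≤
      (1 - 1 / q)⁻¹ * ∑ j ∈ Ico (m + 1 - r) m, (1 / q) ^ (2 * j) * Pmass q j := by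
  have hmaps : ∀ l ∈ univ.filter (fun l : m.Partition => ∀ p ∈ l.parts, p < r),
      l.parts.sup ∈ Ico 1 r := by
    intro l hl
    have hsup := Multiset.sup_mem_of_ne_zero (l.parts_ne_zero hm)
    exact mem_Ico.2 ⟨l.parts_pos hsup, (mem_filter.1 hl).2 _ hsup⟩
  have hreflect : ∑ j ∈ Ico (m + 1 - r) m, (1 / q) ^ (2 * j) * Pmass q j =
      ∑ a ∈ Ico 1 r, (1 / q) ^ (2 * (m - a)) * Pmass q (m - a) := by
    simpa using (sum_Ico_reflect (fun j => (1 / q) ^ (2 * j) * Pmass q j) 1 hr).symm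
  rw [← sum_fiberwise_of_maps_to hmaps, hreflect, mul_sum]
  refine sum_le_sum fun a ha => ?_
  obtain ⟨ha1, har⟩ := mem_Ico.1 ha
  calc _ ≤ ∑ l ∈ univ.filter (fun l : m.Partition => l.parts.sup = a), Pweight q l :=
        sum_le_sum_of_subset_of_nonneg (filter_subset_filter _ (subset_univ _))
          fun l _ _ => (Pweight_pos hq l).le
    _ ≤ _ := (sum_Pweight_filter_sup_eq_le hq ha1 (by omega)).trans_eq (by ring)

theorem Pmass_le_sum_range (hq : 1 < q) {m : ℕ} (hm : 0 < m) :
    Pmass q m ≤ (1 - 1 / q)⁻¹ * ∑ j ∈ range m, (1 / q) ^ (2 * j) * Pmass q j := by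
  have hall : univ.filter (fun l : m.Partition => ∀ p ∈ l.parts, p < m + 1) = univ :=
    filter_true_of_mem fun _ _ _ hp => Nat.lt_succ_of_le (Nat.Partition.le_of_mem_parts hp)
  have h := sum_Pweight_filter_lt_le (q := q) hq hm le_rfl
  rw [hall, Nat.sub_self, ← range_eq_Ico] at h
  exact h

end Weight

section Recursion

variable {u : ℝ}

/-- `(1 - u)⁻²` survives one step of the recursion once the terms `j = 0, 1` are bounded by `1`
and `(1 - u)⁻¹` (bounding them by `(1 - u)⁻²` too would fail at `u = 1/2`); the inequality
reduces to `u³ ≤ (1 - u)²(1 - u²)`, which needs `u ≤ 1/2`. -/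
theorem one_sub_inv_mul_le_one_sub_inv_sq (hu0 : 0 ≤ u) (hu : u ≤ 1 / 2) :
    (1 - u)⁻¹ * (1 + u ^ 2 * (1 - u)⁻¹ + (1 - u)⁻¹ ^ 2 * ((u ^ 2) ^ 2 / (1 - u ^ 2))) ≤
      (1 - u)⁻¹ ^ 2 := by
  have h1 : 0 < 1 - u := by linarith
  have h2 : 0 < 1 - u ^ 2 := by nlinarith
  have hcube : u ^ 3 ≤ (1 - u) ^ 2 * (1 - u ^ 2) := by nlinarith [pow_le_pow_left₀ hu0 hu 3]
  have hdiff : (1 - u)⁻¹ ^ 2 -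
      (1 - u)⁻¹ * (1 + u ^ 2 * (1 - u)⁻¹ + (1 - u)⁻¹ ^ 2 * ((u ^ 2) ^ 2 / (1 - u ^ 2))) =
        u * ((1 - u) ^ 2 * (1 - u ^ 2) - u ^ 3) / ((1 - u) ^ 3 * (1 - u ^ 2)) := by
    field_simp
    ring
  rw [← sub_nonneg, hdiff]
  exact div_nonneg (mul_nonneg hu0 (by linarith)) (by positivity)

theorem sum_Ico_pow_mul_le {B : ℝ} {t : ℕ → ℝ} (hu0 : 0 ≤ u) (hu : u < 1) (hB : 0 ≤ B)
    {a b : ℕ} (ht : ∀ j ∈ Ico a b, t j ≤ B) :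
    ∑ j ∈ Ico a b, u ^ (2 * j) * t j ≤ B * ((u ^ 2) ^ a / (1 - u ^ 2)) :=
  calc ∑ j ∈ Ico a b, u ^ (2 * j) * t j
      ≤ ∑ j ∈ Ico a b, B * (u ^ 2) ^ j :=
        sum_le_sum fun j hj => by
          rw [← pow_mul, mul_comm]
          exact mul_le_mul_of_nonneg_right (ht j hj) (by positivity)
    _ ≤ B * ((u ^ 2) ^ a / (1 - u ^ 2)) := by
        rw [← mul_sum]
        gcongr
        exact geom_sum_Ico_le_of_lt_one (sq_nonneg u) (by nlinarith)

theorem le_one_sub_inv_sq_of_le_sum_range (hu0 : 0 ≤ u) (hu : u ≤ 1 / 2) {t : ℕ → ℝ}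
    (h0 : t 0 ≤ 1) (hrec : ∀ m, 0 < m → t m ≤ (1 - u)⁻¹ * ∑ j ∈ range m, u ^ (2 * j) * t j)
    (m : ℕ) : t m ≤ (1 - u)⁻¹ ^ 2 := by
  have hu1 : 0 < 1 - u := by linarith
  have hinv : 1 ≤ (1 - u)⁻¹ := one_le_inv₀ hu1 |>.2 (by linarith)
  have h1 : t 1 ≤ (1 - u)⁻¹ := by
    simpa using (hrec 1 one_pos).trans
      (mul_le_of_le_one_right (by positivity) (by simpa using h0))
  induction m using Nat.strong_induction_on with
  | _ m ih =>
    match m with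
    | 0 => exact h0.trans (one_le_pow₀ hinv)
    | 1 => exact h1.trans (le_self_pow₀ hinv two_ne_zero)
    | k + 2 =>
      have htail := sum_Ico_pow_mul_le (a := 2) (b := k + 2) hu0 (by linarith) (by positivity)
        fun j hj => ih j (mem_Ico.1 hj).2
      calc t (k + 2) ≤ (1 - u)⁻¹ * ∑ j ∈ range (k + 2), u ^ (2 * j) * t j := hrec _ (by omega)
        _ = (1 - u)⁻¹ * (t 0 + u ^ 2 * t 1 + ∑ j ∈ Ico 2 (k + 2), u ^ (2 * j) * t j) := by
            rw [← sum_range_add_sum_Ico _ (by omega : 2 ≤ k + 2)]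
            simp [sum_range_succ]
        _ ≤ (1 - u)⁻¹ *
            (1 + u ^ 2 * (1 - u)⁻¹ + (1 - u)⁻¹ ^ 2 * ((u ^ 2) ^ 2 / (1 - u ^ 2))) := by
            gcongr
        _ ≤ (1 - u)⁻¹ ^ 2 := one_sub_inv_mul_le_one_sub_inv_sq hu0 hu

end Recursion

section Tail

variable {q : ℝ} {n r : ℕ}

theorem Pmass_le_one_sub_inv_sq (hq : 2 ≤ q) (m : ℕ) : Pmass q m ≤ (1 - 1 / q)⁻¹ ^ 2 :=
  le_one_sub_inv_sq_of_le_sum_range (by positivity) (one_div_le_one_div_of_le two_pos hq)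
    Pmass_zero.le (fun _ hm => Pmass_le_sum_range (by linarith) hm) m

theorem sum_Pweight_filter_lt_le_pow (hq : 2 ≤ q) (hn : 0 < n) (hr : r ≤ n + 1) :
    ∑ l ∈ univ.filter (fun l : n.Partition => ∀ p ∈ l.parts, p < r), Pweight q l ≤
      (1 - 1 / q)⁻¹ *
        ((1 - 1 / q)⁻¹ ^ 2 * (((1 / q) ^ 2) ^ (n + 1 - r) / (1 - (1 / q) ^ 2))) :=
  (sum_Pweight_filter_lt_le (by linarith) hn hr).trans <| by
    have := one_sub_one_div_pos (by linarith : 1 < q)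
    gcongr
    exact sum_Ico_pow_mul_le (by positivity) (by linarith) (by positivity)
      fun j _ => Pmass_le_one_sub_inv_sq hq j

theorem Ptail_eq_qPoch_mul_sum_Pweight :
    Ptail n q r = qPoch q n *
      ∑ l ∈ univ.filter (fun l : n.Partition => ∀ p ∈ l.parts, p < r), Pweight q l := by
  simp only [Ptail, Pmeas_eq_qPoch_mul_Pweight, mul_sum]

end Tail

theorem stmt17_general (q : ℝ) (hq : 2 ≤ q) (n r : ℕ) (hr : 1 ≤ r) (hrn : r ≤ n - 1) :
    Ptail n q r ≤
      (1 - 1/q)⁻¹^2 *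
        (1 / q^(2*n - 2*r + 2) + (1 / (1 - 1/q^(2*n + 1))) * (1 / q^(n + 1))) := by
  have hq1 : 1 < q := by linarith
  have hu : 0 < 1 - 1 / q := one_sub_one_div_pos hq1
  have hu2 : 0 < 1 - (1 / q) ^ 2 := by simpa using one_sub_one_div_pow_pos hq1 two_ne_zero
  have hpoch : qPoch q n ≤ (1 - 1 / q) * (1 - (1 / q) ^ 2) := by
    simpa [qPoch_two] using qPoch_le_qPoch hq1 (by omega : 2 ≤ n)
  have hpow : ((1 / q) ^ 2) ^ (n + 1 - r) = 1 / q ^ (2 * n - 2 * r + 2) := by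
    rw [← pow_mul, one_div_pow, show 2 * (n + 1 - r) = 2 * n - 2 * r + 2 by omega]
  have hrest : 0 ≤ 1 / (1 - 1 / q ^ (2 * n + 1)) * (1 / q ^ (n + 1)) := by
    have := one_sub_one_div_pow_pos hq1 (by omega : 2 * n + 1 ≠ 0)
    positivity
  calc Ptail n q r
      ≤ (1 - 1 / q) * (1 - (1 / q) ^ 2) *
        ((1 - 1 / q)⁻¹ *
          ((1 - 1 / q)⁻¹ ^ 2 * (((1 / q) ^ 2) ^ (n + 1 - r) / (1 - (1 / q) ^ 2)))) :=
        Ptail_eq_qPoch_mul_sum_Pweight.trans_le <| mul_le_mul hpoch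
          (sum_Pweight_filter_lt_le_pow hq (by omega) (by omega))
          (sum_nonneg fun l _ => (Pweight_pos hq1 l).le) (mul_pos hu hu2).le
    _ = (1 - 1 / q)⁻¹ ^ 2 * (1 / q ^ (2 * n - 2 * r + 2)) := by
        rw [← hpow]
        generalize 1 - (1 / q) ^ 2 = y at hu2 ⊢
        generalize 1 - 1 / q = x at hu ⊢
        field_simp
    _ ≤ _ := by
        gcongr
        exact le_add_of_nonneg_right hrest

theorem stmt17 (q : ℝ) (hq : 2 ≤ q) (n r : ℕ) (hr : 1 ≤ r) (hrn : r ≤ n - 1) (hn : 1 ≤ n) :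
    Ptail n q r ≤
      (1 - 1/q)⁻¹^2 *
        (1 / q^(2*n - 2*r + 2) + (1 / (1 - 1/q^(2*n + 1))) * (1 / q^(n + 1))) :=
  stmt17_general q hq n r hr hrn
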